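/- Let h > 0, ξ_n = a + n·h, φ_n(x) = B_1((x - ξ_{n-1})/h). Then for any integers n, m and real shift s, ∫_ℝ φ_n(x+s) φ_m(x) dx = h · B_3(m - n + 2 + s/h) = h · B_3(n - m + 2 - s/h). -/

import Mathlib

open MeasureTheory Real

noncomputable def B : ℕ → ℝ → ℝ
  | 0, t => if t ∈ Set.Ico (0:ℝ) 1 then 1 else 0
  | p + 1, t => ∫ s in (0:ℝ)..1, B p (t - s)

/-- The hat function centered at ξ_n = a + n h. -/
noncomputable def phi (a h : ℝ) (n : ℤ) (x : ℝ) : ℝ :=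
  B 1 ((x - (a + ((n : ℝ) - 1) * h)) / h)

/-!
Since `B (p+1) = B 0 ⋆ B p`, associativity of convolution gives `B p ⋆ B q = B (p+q+1)`.
If `f` and `g` are a.e. invariant under `t ↦ a - t` and `t ↦ b - t`, then `f ⋆ g` is invariant
under `t ↦ a + b - t`; as `B 0` is symmetric about `1/2` up to a null set, `B (p+1)` is symmetric
about `(p+2)/2`. Substituting `x = ξ_{m-1} + h y` turns the overlap integral into
`h ∫ B 1 (y + τ) B 1 y dy` with `τ = m - n + s/h`, and the symmetry of `B 1` makes this
`h (B 1 ⋆ B 1)(2 - τ) = h B 3 (2 - τ) = h B 3 (2 + τ)`.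
-/

open scoped Convolution
open ContinuousLinearMap (mul)

section Reflection

variable {G E E' F 𝕜 : Type*} [NontriviallyNormedField 𝕜]
  [NormedAddCommGroup E] [NormedSpace 𝕜 E] [NormedAddCommGroup E'] [NormedSpace 𝕜 E']
  [NormedAddCommGroup F] [NormedSpace 𝕜 F] [NormedSpace ℝ F]
  [AddCommGroup G] [MeasurableSpace G] [MeasurableAdd G] [MeasurableNeg G]
  {μ : Measure G} [μ.IsAddLeftInvariant] [μ.IsNegInvariant]

theorem convolution_sub_of_sub_eq (L : E →L[𝕜] E' →L[𝕜] F) {f : G → E} {g : G → E'} {a b : G}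
    (hf : ∀ᵐ t ∂μ, f (a - t) = f t) (hg : ∀ᵐ t ∂μ, g (b - t) = g t) (x : G) :
    (f ⋆[L, μ] g) (a + b - x) = (f ⋆[L, μ] g) x := by
  simp only [convolution_def]
  rw [← integral_sub_left_eq_self _ μ a]
  refine integral_congr_ae ?_
  filter_upwards [hf, (Measure.measurePreserving_sub_left μ x).quasiMeasurePreserving.ae hg]
    with t hft hgt
  rw [← hft, ← hgt, show a + b - x - (a - t) = b - (x - t) by abel]

end Reflection

theorem B_zero_eq_indicator : B 0 = (Set.Ico 0 1).indicator 1 := by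
  ext t
  simp [B, Set.indicator_apply]

theorem B_succ_apply (p : ℕ) (t : ℝ) : B (p + 1) t = ∫ s in (0:ℝ)..1, B p (t - s) := rfl

theorem B_nonneg (p : ℕ) (t : ℝ) : 0 ≤ B p t := by
  induction p generalizing t with
  | zero => rw [B_zero_eq_indicator]; exact Set.indicator_nonneg (fun _ _ => zero_le_one) _
  | succ p ih => exact intervalIntegral.integral_nonneg zero_le_one fun s _ => ih _

theorem B_eq_zero_of_notMem_Icc {p : ℕ} {t : ℝ} (ht : t ∉ Set.Icc 0 ((p : ℝ) + 1)) :
    B p t = 0 := by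
  induction p generalizing t with
  | zero =>
    rw [B_zero_eq_indicator]
    exact Set.indicator_of_notMem (fun h => ht (by simpa using Set.Ico_subset_Icc_self h)) _
  | succ p ih =>
    rw [B_succ_apply, intervalIntegral.integral_of_le zero_le_one]
    refine setIntegral_eq_zero_of_forall_eq_zero fun s hs => ih fun h => ht ?_
    push_cast
    constructor <;> linarith [hs.1, hs.2, h.1, h.2]

theorem B_succ_eq_convolution (p : ℕ) : B (p + 1) = B 0 ⋆[mul ℝ ℝ] B p := by
  ext t
  rw [B_succ_apply, intervalIntegral.integral_of_le zero_le_one, convolution_def,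
    ← setIntegral_congr_set Ico_ae_eq_Ioc, ← integral_indicator measurableSet_Ico]
  congr 1 with s
  simp [B_zero_eq_indicator, Set.indicator_apply]

theorem measurable_B (p : ℕ) : Measurable (B p) := by
  have hB0 : Measurable (B 0) := by
    rw [B_zero_eq_indicator]; exact measurable_one.indicator measurableSet_Ico
  induction p with
  | zero => exact hB0
  | succ p ih =>
    rw [B_succ_eq_convolution]
    exact ((hB0.comp measurable_snd).mul (ih.comp (measurable_fst.sub measurable_snd)))
      |>.stronglyMeasurable.integral_prod_right'.measurable

theorem B_le_one (p : ℕ) (t : ℝ) : B p t ≤ 1 := by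
  induction p generalizing t with
  | zero => rw [B_zero_eq_indicator]; exact Set.indicator_le_self' (fun _ _ => zero_le_one) t
  | succ p ih =>
    calc B (p + 1) t ≤ ‖B (p + 1) t‖ := le_norm_self _
      _ ≤ 1 * |1 - 0| := intervalIntegral.norm_integral_le_of_norm_le_const fun s _ => by
          rw [norm_of_nonneg (B_nonneg _ _)]; exact ih _
      _ = 1 := by norm_num

theorem norm_B (p : ℕ) : (fun t => ‖B p t‖) = B p :=
  funext fun t => norm_of_nonneg (B_nonneg p t)

theorem integrable_B (p : ℕ) : Integrable (B p) := by
  refine (integrableOn_iff_integrable_of_support_subset (s := Set.Icc 0 ((p : ℝ) + 1))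
    fun t ht => ?_).mp
    (Measure.integrableOn_of_bounded (M := 1) measure_Icc_lt_top.ne
      (measurable_B p).aestronglyMeasurable
      (ae_of_all _ fun t => by rw [norm_of_nonneg (B_nonneg p t)]; exact B_le_one p t))
  by_contra h
  exact ht (B_eq_zero_of_notMem_Icc h)

theorem convolutionExistsAt_B (p q : ℕ) (x : ℝ) :
    ConvolutionExistsAt (B p) (B q) x (mul ℝ ℝ) volume := by
  simp only [ConvolutionExistsAt, ContinuousLinearMap.mul_apply']
  exact (integrable_B p).mul_bdd
    ((measurable_B q).comp (measurable_const.sub measurable_id)).aestronglyMeasurable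
    (ae_of_all _ fun t => by rw [norm_of_nonneg (B_nonneg _ _)]; exact B_le_one q _)

theorem B_convolution_B (p q : ℕ) : B p ⋆[mul ℝ ℝ] B q = B (p + q + 1) := by
  induction p with
  | zero => rw [zero_add, B_succ_eq_convolution]
  | succ p ih =>
    ext x
    rw [B_succ_eq_convolution, convolution_assoc (mul ℝ ℝ) (mul ℝ ℝ) (mul ℝ ℝ) (mul ℝ ℝ)
      (fun x y z => mul_assoc x y z) (measurable_B 0).aestronglyMeasurable (measurable_B p).aestronglyMeasurable
      (measurable_B q).aestronglyMeasurable (ae_of_all _ (convolutionExistsAt_B 0 p))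
      (by simpa only [norm_B] using ae_of_all _ (convolutionExistsAt_B p q))
      (by simpa only [norm_B, ih] using convolutionExistsAt_B 0 (p + q + 1) x),
      ih, ← B_succ_eq_convolution]
    congr 1
    omega

theorem B_zero_reflect_ae : ∀ᵐ t, B 0 (1 - t) = B 0 t := by
  filter_upwards [(Set.toFinite ({0, 1} : Set ℝ)).countable.ae_notMem volume] with t ht
  simp only [Set.mem_insert_iff, Set.mem_singleton_iff, not_or] at ht
  simp only [B_zero_eq_indicator, Set.indicator_apply, Set.mem_Ico, Pi.one_apply]
  grind

theorem B_succ_reflect_of_ae {p : ℕ} (h : ∀ᵐ t, B p ((p : ℝ) + 1 - t) = B p t) (t : ℝ) :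
    B (p + 1) ((p : ℝ) + 2 - t) = B (p + 1) t := by
  rw [B_succ_eq_convolution, ← convolution_sub_of_sub_eq (mul ℝ ℝ) B_zero_reflect_ae h t]
  congr 1
  ring

theorem B_succ_reflect (p : ℕ) (t : ℝ) : B (p + 1) ((p : ℝ) + 2 - t) = B (p + 1) t := by
  induction p generalizing t with
  | zero => exact B_succ_reflect_of_ae (by simpa using B_zero_reflect_ae) t
  | succ p ih =>
    refine B_succ_reflect_of_ae (ae_of_all _ fun u => ?_) t
    rw [← ih u]
    congr 1
    push_cast
    ring

theorem integral_B_one_add_mul_B_one (τ : ℝ) : ∫ y, B 1 (y + τ) * B 1 y = B 3 (2 - τ) := by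
  rw [← B_convolution_B 1 1, convolution_def]
  congr 1 with y
  rw [ContinuousLinearMap.mul_apply', mul_comm, ← B_succ_reflect 0 (y + τ)]
  congr 2
  push_cast
  ring

theorem integral_comp_mul_add_of_pos {E : Type*} [NormedAddCommGroup E] [NormedSpace ℝ E]
    (g : ℝ → E) {h : ℝ} (hh : 0 < h) (c : ℝ) : ∫ x, g x = h • ∫ y, g (h * y + c) := by
  rw [Measure.integral_comp_mul_left (fun x => g (x + c)) h, integral_add_right_eq_self,
    abs_of_pos (inv_pos.2 hh), smul_smul, mul_inv_cancel₀ hh.ne', one_smul]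

theorem hat_shifted_overlap (a h s : ℝ) (hh : 0 < h) (n m : ℤ) :
    (∫ x : ℝ, phi a h n (x + s) * phi a h m x)
      = h * B 3 ((m : ℝ) - (n : ℝ) + 2 + s / h) ∧
    (∫ x : ℝ, phi a h n (x + s) * phi a h m x)
      = h * B 3 ((n : ℝ) - (m : ℝ) + 2 - s / h) := by
  set τ : ℝ := m - n + s / h with hτ
  have hrescale : ∫ x, phi a h n (x + s) * phi a h m x = h * B 3 (2 - τ) := by
    rw [integral_comp_mul_add_of_pos _ hh (a + ((m : ℝ) - 1) * h), smul_eq_mul,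
      ← integral_B_one_add_mul_B_one]
    congr 1
    congr 1 with y
    simp only [phi, hτ]
    congr 2 <;> field_simp <;> ring
  have hsymm : B 3 (2 - τ) = B 3 (2 + τ) := by
    rw [← B_succ_reflect 2 (2 + τ)]
    congr 1
    push_cast
    ring
  constructor
  · rw [hrescale, hsymm, hτ]
    congr 2
    ring
  · rw [hrescale, hτ]
    congr 2
    ring
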